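/- Let D₀ = [[1,2,0],[0,0,1],[0,0,0]] and D₁ = [[0,0,0],[2,0,0],[0,1,2]]. Then D₁D₀ = [[0,0,0],[2,4,0],[0,0,1]], and for every integer j ≥ 2, D₁D₀^j = [[0,0,0],[2,4,4],[0,0,0]]. In particular the products D₁D₀^j for j ≥ 0 take only three distinct values. -/
import Mathlib


/-- For the quadrinomial transfer matrices `D₀ = [[1,2,0],[0,0,1],[0,0,0]]` and
`D₁ = [[0,0,0],[2,0,0],[0,1,2]]`: `D₁D₀ = [[0,0,0],[2,4,0],[0,0,1]]`, for all `j ≥ 2`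
`D₁D₀^j = [[0,0,0],[2,4,4],[0,0,0]]`, and hence the products `D₁D₀^j` (`j ≥ 0`) take only
three distinct values. -/
theorem quadrinomial_rewording :
    let D0 : Matrix (Fin 3) (Fin 3) ℤ := !![1, 2, 0; 0, 0, 1; 0, 0, 0]
    let D1 : Matrix (Fin 3) (Fin 3) ℤ := !![0, 0, 0; 2, 0, 0; 0, 1, 2]
    D1 * D0 = !![0, 0, 0; 2, 4, 0; 0, 0, 1] ∧
    (∀ j : ℕ, 2 ≤ j → D1 * D0 ^ j = !![0, 0, 0; 2, 4, 4; 0, 0, 0]) ∧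
    (∀ j : ℕ, D1 * D0 ^ j ∈
      ({D1, D1 * D0, !![0, 0, 0; 2, 4, 4; 0, 0, 0]} : Set (Matrix (Fin 3) (Fin 3) ℤ))) := by
  intro D0 D1
  have h1 : D1 * D0 = !![0, 0, 0; 2, 4, 0; 0, 0, 1] := by
    ext i j
    fin_cases i <;> fin_cases j <;>
      simp [D0, D1, Matrix.mul_apply, Fin.sum_univ_three, Matrix.vecHead, Matrix.vecTail]
  have h2 : D1 * D0 ^ 2 = !![0, 0, 0; 2, 4, 4; 0, 0, 0] := by
    rw [pow_two, ← mul_assoc, h1]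
    ext i j
    fin_cases i <;> fin_cases j <;>
      simp [D0, Matrix.mul_apply, Fin.sum_univ_three, Matrix.vecHead, Matrix.vecTail]
  have habs : (!![0, 0, 0; 2, 4, 4; 0, 0, 0] : Matrix (Fin 3) (Fin 3) ℤ) * D0 =
      !![0, 0, 0; 2, 4, 4; 0, 0, 0] := by
    ext i j
    fin_cases i <;> fin_cases j <;>
      simp [D0, Matrix.mul_apply, Fin.sum_univ_three, Matrix.vecHead, Matrix.vecTail]
  have hstep : ∀ j : ℕ, 2 ≤ j → D1 * D0 ^ j = !![0, 0, 0; 2, 4, 4; 0, 0, 0] := by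
    intro j hj
    induction j with
    | zero => omega
    | succ n ih =>
      rcases Nat.lt_or_ge n 2 with hn | hn
      · interval_cases n
        · omega
        · exact h2
      · rw [pow_succ, ← mul_assoc, ih hn, habs]
  refine ⟨h1, hstep, fun j => ?_⟩
  match j with
  | 0 => simp
  | 1 => simp [pow_one]
  | (n+2) => exact Or.inr (Or.inr (hstep (n+2) (by omega)))
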